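/- Let s be a strategy profile of a parking instance satisfying the greedy-by-resilience invariant, let i be an agent and let j be a slot with j ∉ F i s. Then c i (Function.update s i (some j)) = ⊤. In particular, if F i s = ∅ (so s i = none), every unilateral deviation of agent i has cost ⊤. -/

import Mathlib

open Classical in
/-- The cost of agent `i` under profile `s`. -/
noncomputable def cost {n m : ℕ} (t : Fin n → ℝ) (r : Fin m → ℝ) (f : Fin n → ℝ)
    (i : Fin n) (s : Fin n → Option (Fin m)) : WithTop ℝ :=
  match s i with
  | none => ⊤
  | some j =>
    if t i - r j ≥ 0 ∧ ¬ ∃ k, k ≠ i ∧ f k < f i ∧ s k = some j ∧ t k - r j ≥ 0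
    then ((f i * (t i - r j) : ℝ) : WithTop ℝ)
    else ⊤

/-- `Feas t r f i s` is the set `F i s` of slots agent `i` can feasibly reach
that are not chosen by any agent of strictly lower resilience. -/
def Feas {n m : ℕ} (t : Fin n → ℝ) (r : Fin m → ℝ) (f : Fin n → ℝ)
    (i : Fin n) (s : Fin n → Option (Fin m)) : Set (Fin m) :=
  { j | t i - r j ≥ 0 ∧ ∀ k, f k < f i → s k ≠ some j }

/-- The greedy-by-resilience invariant maintained by Algorithm 1. -/
def GreedyInv {n m : ℕ} (t : Fin n → ℝ) (r : Fin m → ℝ) (f : Fin n → ℝ)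
    (s : Fin n → Option (Fin m)) : Prop :=
  ∀ i : Fin n,
    ((Feas t r f i s).Nonempty →
      ∃ j ∈ Feas t r f i s, s i = some j ∧
        ∀ j' ∈ Feas t r f i s, f i * (t i - r j) ≤ f i * (t i - r j')) ∧
    (Feas t r f i s = ∅ → s i = none)

/-- Nash equilibrium: no agent can improve by a unilateral deviation. -/
def NashEq {n m : ℕ} (t : Fin n → ℝ) (r : Fin m → ℝ) (f : Fin n → ℝ)
    (s : Fin n → Option (Fin m)) : Prop :=
  ∀ (i : Fin n) (o : Option (Fin m)),
    cost t r f i s ≤ cost t r f i (Function.update s i o)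


section

variable {n m : ℕ} {t : Fin n → ℝ} {r : Fin m → ℝ} {f : Fin n → ℝ}
  {s : Fin n → Option (Fin m)}

theorem GreedyInv.mem_feas (hs : GreedyInv t r f s) {k : Fin n} {j : Fin m}
    (hk : s k = some j) : j ∈ Feas t r f k s := by
  rcases (Feas t r f k s).eq_empty_or_nonempty with hempty | hne
  · simp [(hs k).2 hempty] at hk
  · obtain ⟨j', hj', hkj', -⟩ := (hs k).1 hne
    rwa [Option.some_inj.mp (hk.symm.trans hkj')]

theorem cost_eq_top_of_eq_none {i : Fin n} (hi : s i = none) : cost t r f i s = ⊤ := by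
  simp [cost, hi]

/-- A reachable slot outside `F i s` is held by an agent `k` of lower resilience, who by the
invariant can reach it too, and so blocks `i`. -/
theorem GreedyInv.cost_update_some_eq_top (hs : GreedyInv t r f s) {i : Fin n} {j : Fin m}
    (hj : j ∉ Feas t r f i s) : cost t r f i (Function.update s i (some j)) = ⊤ := by
  rw [cost, Function.update_self]
  refine if_neg fun ⟨hreach, hfree⟩ => hfree ?_
  obtain ⟨k, hlt, hkj⟩ : ∃ k, f k < f i ∧ s k = some j := by
    by_contra! hnone
    exact hj ⟨hreach, hnone⟩
  have hki : k ≠ i := by rintro rfl; exact lt_irrefl _ hlt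
  exact ⟨k, hki, hlt, by rwa [Function.update_of_ne hki], (hs.mem_feas hkj).1⟩

end

theorem cost_update_eq_top_of_not_mem_feas_general {n m : ℕ} (t : Fin n → ℝ) (r : Fin m → ℝ)
    (f : Fin n → ℝ)
    (s : Fin n → Option (Fin m)) (hs : GreedyInv t r f s)
    (i : Fin n) (j : Fin m) (hj : j ∉ Feas t r f i s) :
    cost t r f i (Function.update s i (some j)) = ⊤ ∧
      (Feas t r f i s = ∅ →
        ∀ o : Option (Fin m), cost t r f i (Function.update s i o) = ⊤) := by
  refine ⟨hs.cost_update_some_eq_top hj, fun hempty o => ?_⟩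
  cases o with
  | none => exact cost_eq_top_of_eq_none (Function.update_self ..)
  | some j' => exact hs.cost_update_some_eq_top (by simp [hempty])

/-- under the greedy-by-resilience invariant, deviating to a slot
outside `F i s` has cost `⊤`; in particular if `F i s = ∅` every unilateral
deviation of agent `i` has cost `⊤`. -/
theorem cost_update_eq_top_of_not_mem_feas {n m : ℕ} (t : Fin n → ℝ) (r : Fin m → ℝ)
    (f : Fin n → ℝ) (hf_inj : Function.Injective f) (hf_bd : ∀ i, 0 ≤ f i ∧ f i ≤ 1)
    (s : Fin n → Option (Fin m)) (hs : GreedyInv t r f s)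
    (i : Fin n) (j : Fin m) (hj : j ∉ Feas t r f i s) :
    cost t r f i (Function.update s i (some j)) = ⊤ ∧
      (Feas t r f i s = ∅ →
        ∀ o : Option (Fin m), cost t r f i (Function.update s i o) = ⊤) :=
  cost_update_eq_top_of_not_mem_feas_general t r f s hs i j hj
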